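/- arXiv:2011.09711 — 6 statements merged into one kernel-verified Lean document; each statement's English description precedes it below -/
import Mathlib

section
/- For all vectors v,w∈ℝ⁴ that are both divergence-free at ξ, one has ⟨B(ξ,ε)v, w⟩ + ⟨v, B(ξ,ε)w⟩ = −2ν|ξ|²⟨v,w⟩, where ⟨·,·⟩ is the standard inner product on ℝ⁴. (Equivalently, the penalization part of B(ξ,ε) acts skew-symmetrically on the divergence-free subspace.) -/
open Matrix

/-- The Fourier symbol `B(ξ,ε)` of the operator `νΔ − (1/ε)ℙ𝒜` (case `ν = ν'`). -/
noncomputable def Bmat (ν ε F ξ1 ξ2 ξ3 : ℝ) : Matrix (Fin 4) (Fin 4) ℝ :=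
  !![-ν * (ξ1^2 + ξ2^2 + ξ3^2) + ξ1 * ξ2 / (ε * (ξ1^2 + ξ2^2 + ξ3^2)),
       (ξ2^2 + ξ3^2) / (ε * (ξ1^2 + ξ2^2 + ξ3^2)), 0,
       ξ1 * ξ3 / (ε * F * (ξ1^2 + ξ2^2 + ξ3^2));
     -(ξ1^2 + ξ3^2) / (ε * (ξ1^2 + ξ2^2 + ξ3^2)),
       -ν * (ξ1^2 + ξ2^2 + ξ3^2) - ξ1 * ξ2 / (ε * (ξ1^2 + ξ2^2 + ξ3^2)), 0,
       ξ2 * ξ3 / (ε * F * (ξ1^2 + ξ2^2 + ξ3^2));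
     ξ2 * ξ3 / (ε * (ξ1^2 + ξ2^2 + ξ3^2)),
       -(ξ1 * ξ3) / (ε * (ξ1^2 + ξ2^2 + ξ3^2)),
       -ν * (ξ1^2 + ξ2^2 + ξ3^2),
       -(ξ1^2 + ξ2^2) / (ε * F * (ξ1^2 + ξ2^2 + ξ3^2));
     0, 0, 1 / (ε * F), -ν * (ξ1^2 + ξ2^2 + ξ3^2)]

namespace Matrix

variable {n R : Type*} [Fintype n] [CommRing R]

theorem mulVec_dotProduct_add_dotProduct_mulVec (M : Matrix n n R) (v w : n → R) :
    M *ᵥ v ⬝ᵥ w + v ⬝ᵥ M *ᵥ w = (M + Mᵀ) *ᵥ v ⬝ᵥ w := by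
  rw [add_mulVec, add_dotProduct, mulVec_transpose, dotProduct_mulVec]

theorem vecMulVec_add_vecMulVec_mulVec_dotProduct_eq_zero {u a v w : n → R}
    (hv : u ⬝ᵥ v = 0) (hw : u ⬝ᵥ w = 0) :
    (vecMulVec u a + vecMulVec a u) *ᵥ v ⬝ᵥ w = 0 := by
  simp [add_mulVec, vecMulVec_mulVec, hv, hw]

theorem mulVec_dotProduct_add_dotProduct_mulVec_of_add_transpose_eq [DecidableEq n]
    {M : Matrix n n R} {c d : R} {u a : n → R}
    (hM : M + Mᵀ = c • 1 + d • (vecMulVec u a + vecMulVec a u))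
    {v w : n → R} (hv : u ⬝ᵥ v = 0) (hw : u ⬝ᵥ w = 0) :
    M *ᵥ v ⬝ᵥ w + v ⬝ᵥ M *ᵥ w = c * (v ⬝ᵥ w) := by
  rw [mulVec_dotProduct_add_dotProduct_mulVec, hM, add_mulVec, add_dotProduct, smul_mulVec,
    smul_mulVec, smul_dotProduct, smul_dotProduct,
    vecMulVec_add_vecMulVec_mulVec_dotProduct_eq_zero hv hw, one_mulVec, smul_eq_mul, smul_zero,
    add_zero]

end Matrix

open Matrix

/-- The symmetric part of the penalization is the rank-two form `ξ ⊗ a + a ⊗ ξ` with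
`ξ = (ξ₁, ξ₂, ξ₃, 0)`, which vanishes on pairs of divergence-free vectors. -/
theorem Bmat_add_transpose (ν ε F ξ1 ξ2 ξ3 : ℝ) (hε : ε ≠ 0) (hF : F ≠ 0)
    (hS : ξ1^2 + ξ2^2 + ξ3^2 ≠ 0) :
    Bmat ν ε F ξ1 ξ2 ξ3 + (Bmat ν ε F ξ1 ξ2 ξ3)ᵀ =
      (-2 * ν * (ξ1^2 + ξ2^2 + ξ3^2)) • 1 + (ε * (ξ1^2 + ξ2^2 + ξ3^2))⁻¹ •
        (vecMulVec ![ξ1, ξ2, ξ3, 0] ![ξ2, -ξ1, 0, ξ3 / F] +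
          vecMulVec ![ξ2, -ξ1, 0, ξ3 / F] ![ξ1, ξ2, ξ3, 0]) := by
  ext i j
  fin_cases i <;> fin_cases j <;> simp [Bmat] <;> field_simp <;> ring

theorem sq_add_sq_add_sq_ne_zero {ξ1 ξ2 ξ3 : ℝ} (hξ : ¬(ξ1 = 0 ∧ ξ2 = 0 ∧ ξ3 = 0)) :
    ξ1^2 + ξ2^2 + ξ3^2 ≠ 0 := by
  contrapose! hξ
  refine ⟨?_, ?_, ?_⟩ <;> nlinarith [sq_nonneg ξ1, sq_nonneg ξ2, sq_nonneg ξ3]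

theorem skew_symmetry_on_divfree_general
    (ν ε F ξ1 ξ2 ξ3 : ℝ) (hε : 0 < ε) (hF : 0 < F)
    (hξ : ¬(ξ1 = 0 ∧ ξ2 = 0 ∧ ξ3 = 0)) :
    ∀ v w : Fin 4 → ℝ,
      ξ1 * v 0 + ξ2 * v 1 + ξ3 * v 2 = 0 →
      ξ1 * w 0 + ξ2 * w 1 + ξ3 * w 2 = 0 →
      (∑ i, (Bmat ν ε F ξ1 ξ2 ξ3).mulVec v i * w i) +
        (∑ i, v i * (Bmat ν ε F ξ1 ξ2 ξ3).mulVec w i) =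
        -2 * ν * (ξ1^2 + ξ2^2 + ξ3^2) * ∑ i, v i * w i := by
  intro v w hv hw
  have divFree {x : Fin 4 → ℝ} (hx : ξ1 * x 0 + ξ2 * x 1 + ξ3 * x 2 = 0) :
      ![ξ1, ξ2, ξ3, 0] ⬝ᵥ x = 0 := by
    simpa [dotProduct, Fin.sum_univ_four] using hx
  exact mulVec_dotProduct_add_dotProduct_mulVec_of_add_transpose_eq
    (Bmat_add_transpose ν ε F ξ1 ξ2 ξ3 hε.ne' hF.ne' (sq_add_sq_add_sq_ne_zero hξ))
    (divFree hv) (divFree hw)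

/-- On the divergence-free subspace at `ξ`, one has
`⟨Bv,w⟩ + ⟨v,Bw⟩ = −2ν|ξ|²⟨v,w⟩` for the standard inner product of `ℝ⁴`. -/
theorem skew_symmetry_on_divfree
    (ν ε F ξ1 ξ2 ξ3 : ℝ) (hν : 0 < ν) (hε : 0 < ε) (hF : 0 < F)
    (hξ : ¬(ξ1 = 0 ∧ ξ2 = 0 ∧ ξ3 = 0)) :
    ∀ v w : Fin 4 → ℝ,
      ξ1 * v 0 + ξ2 * v 1 + ξ3 * v 2 = 0 →
      ξ1 * w 0 + ξ2 * w 1 + ξ3 * w 2 = 0 →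
      (∑ i, (Bmat ν ε F ξ1 ξ2 ξ3).mulVec v i * w i) +
        (∑ i, v i * (Bmat ν ε F ξ1 ξ2 ξ3).mulVec w i) =
        -2 * ν * (ξ1^2 + ξ2^2 + ξ3^2) * ∑ i, v i * w i :=
  skew_symmetry_on_divfree_general ν ε F ξ1 ξ2 ξ3 hε hF hξ
end

section
/- The vector w(ξ) = (−ξ₂, ξ₁, 0, −Fξ₃) ∈ ℝ⁴ is divergence-free at ξ and is an eigenvector of B(ξ,ε) with eigenvalue μ = −ν|ξ|², i.e. B(ξ,ε)·w(ξ) = −ν|ξ|²·w(ξ). (This eigenvector corresponds to the quasi-geostrophic part of the flow.) -/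
/-!
`B(ξ,ε) = -ν|ξ|² I + ε⁻¹ A(ξ)`, where `ε⁻¹ A(ξ)` is the symbol of the rotation–stratification
term `-(1/ε)ℙ𝒜`. Hence every vector of `ker A(ξ)` is an eigenvector of `B` for `-ν|ξ|²`, and a direct
computation shows that `A(ξ)` annihilates the quasi-geostrophic mode `(-ξ₂, ξ₁, 0, -Fξ₃)`.
-/

open Matrix

noncomputable def rotStratSymbol (F ξ1 ξ2 ξ3 : ℝ) : Matrix (Fin 4) (Fin 4) ℝ :=
  !![ξ1 * ξ2 / (ξ1^2 + ξ2^2 + ξ3^2), (ξ2^2 + ξ3^2) / (ξ1^2 + ξ2^2 + ξ3^2), 0,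
       ξ1 * ξ3 / (F * (ξ1^2 + ξ2^2 + ξ3^2));
     -(ξ1^2 + ξ3^2) / (ξ1^2 + ξ2^2 + ξ3^2), -(ξ1 * ξ2) / (ξ1^2 + ξ2^2 + ξ3^2), 0,
       ξ2 * ξ3 / (F * (ξ1^2 + ξ2^2 + ξ3^2));
     ξ2 * ξ3 / (ξ1^2 + ξ2^2 + ξ3^2), -(ξ1 * ξ3) / (ξ1^2 + ξ2^2 + ξ3^2), 0,
       -(ξ1^2 + ξ2^2) / (F * (ξ1^2 + ξ2^2 + ξ3^2));
     0, 0, 1 / F, 0]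

def qgMode (F ξ1 ξ2 ξ3 : ℝ) : Fin 4 → ℝ := ![-ξ2, ξ1, 0, -F * ξ3]

theorem Bmat_eq_smul_one_add_smul_rotStratSymbol (ν ε F ξ1 ξ2 ξ3 : ℝ) :
    Bmat ν ε F ξ1 ξ2 ξ3 =
      (-ν * (ξ1^2 + ξ2^2 + ξ3^2)) • (1 : Matrix (Fin 4) (Fin 4) ℝ) +
        ε⁻¹ • rotStratSymbol F ξ1 ξ2 ξ3 := by
  ext i j
  fin_cases i <;> fin_cases j <;> simp [Bmat, rotStratSymbol, div_eq_mul_inv] <;> ring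

theorem rotStratSymbol_mulVec_qgMode {F : ℝ} (hF : F ≠ 0) (ξ1 ξ2 ξ3 : ℝ) :
    rotStratSymbol F ξ1 ξ2 ξ3 *ᵥ qgMode F ξ1 ξ2 ξ3 = 0 := by
  ext i
  fin_cases i <;> simp [rotStratSymbol, qgMode, mulVec, dotProduct, Fin.sum_univ_succ] <;>
    field_simp <;> ring

theorem qg_eigenvector_general
    (ν ε F ξ1 ξ2 ξ3 : ℝ) (hF : 0 < F) :
    (ξ1 * (-ξ2) + ξ2 * ξ1 + ξ3 * 0 = 0) ∧
    (Bmat ν ε F ξ1 ξ2 ξ3).mulVec ![-ξ2, ξ1, 0, -F * ξ3] =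
      (-ν * (ξ1^2 + ξ2^2 + ξ3^2)) • ![-ξ2, ξ1, 0, -F * ξ3] := by
  refine ⟨by ring, ?_⟩
  change Bmat ν ε F ξ1 ξ2 ξ3 *ᵥ qgMode F ξ1 ξ2 ξ3 = _ • qgMode F ξ1 ξ2 ξ3
  rw [Bmat_eq_smul_one_add_smul_rotStratSymbol, add_mulVec, smul_mulVec, one_mulVec,
    smul_mulVec, rotStratSymbol_mulVec_qgMode hF.ne', smul_zero, add_zero]

/-- The vector `(−ξ₂, ξ₁, 0, −Fξ₃)` is divergence-free at `ξ` and is an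
eigenvector of `B(ξ,ε)` for the eigenvalue `μ = −ν|ξ|²` (quasi-geostrophic part). -/
theorem qg_eigenvector
    (ν ε F ξ1 ξ2 ξ3 : ℝ) (hν : 0 < ν) (hε : 0 < ε) (hF : 0 < F)
    (hξ : ¬(ξ1 = 0 ∧ ξ2 = 0 ∧ ξ3 = 0)) :
    (ξ1 * (-ξ2) + ξ2 * ξ1 + ξ3 * 0 = 0) ∧
    (Bmat ν ε F ξ1 ξ2 ξ3).mulVec ![-ξ2, ξ1, 0, -F * ξ3] =
      (-ν * (ξ1^2 + ξ2^2 + ξ3^2)) • ![-ξ2, ξ1, 0, -F * ξ3] :=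
  qg_eigenvector_general ν ε F ξ1 ξ2 ξ3 hF
end

section
/- For each choice of sign ±, the complex number λ_± = −ν|ξ|² ± i·|ξ|_F/(εF|ξ|) is an eigenvalue of the complexification of B(ξ,ε), and it admits a nonzero eigenvector v∈ℂ⁴ that is divergence-free at ξ (i.e. ξ₁v₁+ξ₂v₂+ξ₃v₃=0 and B(ξ,ε)v = λ_± v). -/
open Matrix

/-- The complexification of `B(ξ,ε)`. -/
noncomputable def BmatC (ν ε F ξ1 ξ2 ξ3 : ℝ) : Matrix (Fin 4) (Fin 4) ℂ :=
  (Bmat ν ε F ξ1 ξ2 ξ3).map (fun a => (a : ℂ))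

/-!
`B(ξ,ε) = -ν|ξ|² + ε⁻¹ A(ξ)` with `A` independent of `ν` and `ε`, and `λ± = -ν|ξ|² + l/ε`, where
`l = ±i|ξ|_F/(F|ξ|)` is a root of `l² F² |ξ|² = -|ξ|_F²`. Every such root is an eigenvalue of `A`
with the divergence-free eigenvector `(-ξ₃(ξ₂ + l ξ₁), ξ₃(ξ₁ - l ξ₂), l(ξ₁² + ξ₂²), (ξ₁² + ξ₂²)/F)`.
This vector vanishes when `ξ₁ = ξ₂ = 0`; there `l² = -1` and `(1, l, 0, 0)` takes its place.
-/

lemma sign_mul_I_mul_sqrt_div_sq_mul {ρ r F s : ℝ} (hρ : 0 ≤ ρ) (hr : 0 < r) (hF : F ≠ 0)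
    (hs : s = 1 ∨ s = -1) :
    ((s : ℂ) * Complex.I * ((√ρ / (F * √r) : ℝ) : ℂ)) ^ 2 * ((F : ℂ) ^ 2 * r) = -ρ := by
  have hs2 : (s : ℂ) ^ 2 = 1 := by rcases hs with rfl | rfl <;> norm_num
  have hsqrt : (√ρ / (F * √r)) ^ 2 * (F ^ 2 * r) = ρ := by
    rw [div_pow, mul_pow, Real.sq_sqrt hρ, Real.sq_sqrt hr.le]
    field_simp
  have hsqrtC := congrArg (fun x : ℝ => (x : ℂ)) hsqrt
  push_cast at hsqrtC ⊢
  linear_combination (Complex.I ^ 2 * (s : ℂ) ^ 2) * hsqrtC + (ρ : ℂ) * Complex.I ^ 2 * hs2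
    + (ρ : ℂ) * Complex.I_sq

noncomputable def oscillatingMode (F ξ1 ξ2 ξ3 : ℝ) (l : ℂ) : Fin 4 → ℂ :=
  ![-ξ3 * (ξ2 + l * ξ1), ξ3 * (ξ1 - l * ξ2), l * (ξ1 ^ 2 + ξ2 ^ 2), (ξ1 ^ 2 + ξ2 ^ 2) / F]

section
variable {ν ε F ξ1 ξ2 ξ3 : ℝ} {l : ℂ}

lemma oscillatingMode_ne_zero (hF : F ≠ 0) (hh : ξ1 ^ 2 + ξ2 ^ 2 ≠ 0) :
    oscillatingMode F ξ1 ξ2 ξ3 l ≠ 0 := by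
  intro h
  have h3 := congrFun h 3
  simp [oscillatingMode, hF] at h3
  exact hh (by exact_mod_cast h3)

lemma oscillatingMode_divergence_free :
    (ξ1 : ℂ) * oscillatingMode F ξ1 ξ2 ξ3 l 0 + ξ2 * oscillatingMode F ξ1 ξ2 ξ3 l 1
      + ξ3 * oscillatingMode F ξ1 ξ2 ξ3 l 2 = 0 := by
  simp only [oscillatingMode, Matrix.cons_val]
  ring

lemma BmatC_mulVec_oscillatingMode (hε : ε ≠ 0) (hF : F ≠ 0)
    (hξ : ξ1 ^ 2 + ξ2 ^ 2 + ξ3 ^ 2 ≠ 0)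
    (hl : l ^ 2 * ((F : ℂ) ^ 2 * (ξ1 ^ 2 + ξ2 ^ 2 + ξ3 ^ 2)) =
      -(ξ1 ^ 2 + ξ2 ^ 2 + F ^ 2 * ξ3 ^ 2)) :
    BmatC ν ε F ξ1 ξ2 ξ3 *ᵥ oscillatingMode F ξ1 ξ2 ξ3 l =
      (((-ν * (ξ1 ^ 2 + ξ2 ^ 2 + ξ3 ^ 2) : ℝ) : ℂ) + l / ε) • oscillatingMode F ξ1 ξ2 ξ3 l := by
  have hεC : (ε : ℂ) ≠ 0 := by exact_mod_cast hε
  have hFC : (F : ℂ) ≠ 0 := by exact_mod_cast hF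
  have hξC : (ξ1 : ℂ) ^ 2 + ξ2 ^ 2 + ξ3 ^ 2 ≠ 0 := by exact_mod_cast hξ
  ext i
  fin_cases i <;>
    simp [BmatC, Bmat, oscillatingMode, Matrix.mulVec, dotProduct, Fin.sum_univ_four] <;>
    field_simp
  · linear_combination ((ξ1 : ℂ) * ξ3) * hl
  · linear_combination ((ξ2 : ℂ) * ξ3) * hl
  · linear_combination (-((ξ1 : ℂ) ^ 2 + ξ2 ^ 2)) * hl
  · ring

lemma BmatC_mulVec_vertical (hε : ε ≠ 0) (hF : F ≠ 0) (hξ3 : ξ3 ≠ 0) (hl : l ^ 2 = -1) :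
    BmatC ν ε F 0 0 ξ3 *ᵥ ![1, l, 0, 0] =
      (((-ν * (0 ^ 2 + 0 ^ 2 + ξ3 ^ 2) : ℝ) : ℂ) + l / ε) • ![1, l, 0, 0] := by
  have hεC : (ε : ℂ) ≠ 0 := by exact_mod_cast hε
  have hFC : (F : ℂ) ≠ 0 := by exact_mod_cast hF
  have hξ3C : (ξ3 : ℂ) ≠ 0 := by exact_mod_cast hξ3
  ext i
  fin_cases i <;> simp [BmatC, Bmat, Matrix.mulVec, dotProduct, Fin.sum_univ_four] <;> field_simp
  linear_combination (-1 : ℂ) * hl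

lemma exists_divergence_free_eigenvector_BmatC (hε : ε ≠ 0) (hF : F ≠ 0)
    (hξ : ξ1 ^ 2 + ξ2 ^ 2 + ξ3 ^ 2 ≠ 0)
    (hl : l ^ 2 * ((F : ℂ) ^ 2 * (ξ1 ^ 2 + ξ2 ^ 2 + ξ3 ^ 2)) =
      -(ξ1 ^ 2 + ξ2 ^ 2 + F ^ 2 * ξ3 ^ 2)) :
    ∃ v : Fin 4 → ℂ, v ≠ 0 ∧ (ξ1 : ℂ) * v 0 + ξ2 * v 1 + ξ3 * v 2 = 0 ∧
      BmatC ν ε F ξ1 ξ2 ξ3 *ᵥ v = (((-ν * (ξ1 ^ 2 + ξ2 ^ 2 + ξ3 ^ 2) : ℝ) : ℂ) + l / ε) • v := by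
  by_cases hh : ξ1 ^ 2 + ξ2 ^ 2 = 0
  · obtain ⟨rfl, rfl⟩ : ξ1 = 0 ∧ ξ2 = 0 := by
      rw [add_eq_zero_iff_of_nonneg (sq_nonneg _) (sq_nonneg _)] at hh
      simpa using hh
    have hξ3 : ξ3 ≠ 0 := by simpa using hξ
    have hFξ3 : (F : ℂ) ^ 2 * ξ3 ^ 2 ≠ 0 := by simp [hF, hξ3]
    simp only [Complex.ofReal_zero] at hl
    have hl' : l ^ 2 = -1 := mul_right_cancel₀ hFξ3 (by linear_combination hl)
    exact ⟨![1, l, 0, 0], by simp, by simp, BmatC_mulVec_vertical hε hF hξ3 hl'⟩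
  · exact ⟨_, oscillatingMode_ne_zero hF hh, oscillatingMode_divergence_free,
      BmatC_mulVec_oscillatingMode hε hF hξ hl⟩

end

theorem oscillating_eigenvalues_general
    (ν ε F ξ1 ξ2 ξ3 : ℝ) (hε : 0 < ε) (hF : 0 < F)
    (hξ : ¬(ξ1 = 0 ∧ ξ2 = 0 ∧ ξ3 = 0))
    (sgn : ℝ) (hsgn : sgn = 1 ∨ sgn = -1) :
    ∃ v : Fin 4 → ℂ, v ≠ 0 ∧
      (ξ1 : ℂ) * v 0 + (ξ2 : ℂ) * v 1 + (ξ3 : ℂ) * v 2 = 0 ∧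
      (BmatC ν ε F ξ1 ξ2 ξ3).mulVec v =
        (((-ν * (ξ1^2 + ξ2^2 + ξ3^2) : ℝ) : ℂ) +
          (sgn : ℂ) * Complex.I *
            ((Real.sqrt (ξ1^2 + ξ2^2 + F^2 * ξ3^2) /
                (ε * F * Real.sqrt (ξ1^2 + ξ2^2 + ξ3^2)) : ℝ) : ℂ)) • v := by
  have hr : 0 < ξ1 ^ 2 + ξ2 ^ 2 + ξ3 ^ 2 := by
    contrapose! hξ
    refine ⟨?_, ?_, ?_⟩ <;> refine pow_eq_zero_iff two_ne_zero |>.mp ?_ <;>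
      linarith [sq_nonneg ξ1, sq_nonneg ξ2, sq_nonneg ξ3]
  set l : ℂ := sgn * Complex.I *
    ((√(ξ1 ^ 2 + ξ2 ^ 2 + F ^ 2 * ξ3 ^ 2) / (F * √(ξ1 ^ 2 + ξ2 ^ 2 + ξ3 ^ 2)) : ℝ) : ℂ)
    with hl_def
  have hl : l ^ 2 * ((F : ℂ) ^ 2 * ((ξ1 ^ 2 + ξ2 ^ 2 + ξ3 ^ 2 : ℝ) : ℂ)) =
      -((ξ1 ^ 2 + ξ2 ^ 2 + F ^ 2 * ξ3 ^ 2 : ℝ) : ℂ) :=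
    sign_mul_I_mul_sqrt_div_sq_mul (by positivity) hr hF.ne' hsgn
  push_cast at hl
  have heig : (sgn : ℂ) * Complex.I * ((√(ξ1 ^ 2 + ξ2 ^ 2 + F ^ 2 * ξ3 ^ 2) /
      (ε * F * √(ξ1 ^ 2 + ξ2 ^ 2 + ξ3 ^ 2)) : ℝ) : ℂ) = l / ε := by
    rw [hl_def]; push_cast; ring
  rw [heig]
  exact exists_divergence_free_eigenvector_BmatC hε.ne' hF.ne' hr.ne' hl

/-- For each sign `±`, the complex number `λ± = −ν|ξ|² ± i|ξ|_F/(εF|ξ|)` is an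
eigenvalue of the complexification of `B(ξ,ε)`, with a nonzero divergence-free
eigenvector. -/
theorem oscillating_eigenvalues
    (ν ε F ξ1 ξ2 ξ3 : ℝ) (hν : 0 < ν) (hε : 0 < ε) (hF : 0 < F)
    (hξ : ¬(ξ1 = 0 ∧ ξ2 = 0 ∧ ξ3 = 0))
    (sgn : ℝ) (hsgn : sgn = 1 ∨ sgn = -1) :
    ∃ v : Fin 4 → ℂ, v ≠ 0 ∧
      (ξ1 : ℂ) * v 0 + (ξ2 : ℂ) * v 1 + (ξ3 : ℂ) * v 2 = 0 ∧
      (BmatC ν ε F ξ1 ξ2 ξ3).mulVec v =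
        (((-ν * (ξ1^2 + ξ2^2 + ξ3^2) : ℝ) : ℂ) +
          (sgn : ℂ) * Complex.I *
            ((Real.sqrt (ξ1^2 + ξ2^2 + F^2 * ξ3^2) /
                (ε * F * Real.sqrt (ξ1^2 + ξ2^2 + ξ3^2)) : ℝ) : ℂ)) • v :=
  oscillating_eigenvalues_general ν ε F ξ1 ξ2 ξ3 hε hF hξ sgn hsgn
end

section
/- Set μ = −ν|ξ|², λ = −ν|ξ|² + i·|ξ|_F/(εF|ξ|), and λ̄ its complex conjugate. Then there exist nonzero vectors v₂, v₃, v₄ ∈ ℂ⁴, pairwise orthogonal for the standard Hermitian inner product on ℂ⁴, each divergence-free at ξ, spanning the three-dimensional subspace {v∈ℂ⁴ : ξ₁v₁+ξ₂v₂+ξ₃v₃=0}, such that B(ξ,ε)v₂ = μ v₂, B(ξ,ε)v₃ = λ v₃ and B(ξ,ε)v₄ = λ̄ v₄. In particular B(ξ,ε) restricted to the divergence-free subspace is diagonalizable over ℂ with eigenvalues μ, λ, λ̄. -/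
open Matrix

/-!
Write `r = |ξ|_F / |ξ|`, so that `r² |ξ|² = |ξ|_F²`. The geostrophic mode `(ξ₂, −ξ₁, 0, Fξ₃)` is
annihilated by the rotation–stratification part of `B`, so its eigenvalue is `μ`. When
`(ξ₁, ξ₂) ≠ 0` the inertia–gravity mode
`(−ξ₃(Fξ₂ + irξ₁), ξ₃(Fξ₁ − irξ₂), ir(ξ₁² + ξ₂²), ξ₁² + ξ₂²)` has eigenvalue `λ`; for
`ξ = (0, 0, ξ₃)` it vanishes and `(1, i, 0, 0)` takes its place. As `B` is real, the conjugate
`w̄` of a `λ`-eigenvector `w` is a `λ̄`-eigenvector. The vector `w` is orthogonal to the real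
geostrophic mode and isotropic (`w ⬝ᵥ w = 0`), which makes it orthogonal to `w̄` as well. Three
pairwise orthogonal nonzero divergence-free vectors are independent, so they span the kernel of
the divergence, which has dimension 3.
-/

open Complex

theorem sq_add_sq_pos {R : Type*} [Ring R] [LinearOrder R] [IsStrictOrderedRing R] {a b : R}
    (h : ¬(a = 0 ∧ b = 0)) : 0 < a ^ 2 + b ^ 2 := by
  rcases not_and_or.1 h with h | h <;> positivity

theorem sq_add_sq_add_sq_pos {R : Type*} [Ring R] [LinearOrder R] [IsStrictOrderedRing R]
    {a b c : R} (h : ¬(a = 0 ∧ b = 0 ∧ c = 0)) : 0 < a ^ 2 + b ^ 2 + c ^ 2 := by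
  simp only [not_and_or] at h
  rcases h with h | h | h <;> positivity

theorem linearIndependent_of_ne_zero_of_star_dotProduct_eq_zero {𝕜 ι n : Type*} [RCLike 𝕜]
    [Fintype n] {v : ι → n → 𝕜} (hz : ∀ i, v i ≠ 0)
    (ho : Pairwise fun i j => star (v i) ⬝ᵥ v j = 0) : LinearIndependent 𝕜 v := by
  refine .of_comp (WithLp.linearEquiv 2 𝕜 (n → 𝕜)).symm.toLinearMap
    (linearIndependent_of_ne_zero_of_inner_eq_zero (fun i => ?_) fun i j hij => ?_)
  · simpa using hz i
  · simpa [EuclideanSpace.inner_toLp_toLp, dotProduct_comm] using ho hij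

theorem linearIndependent_fin3_of_star_dotProduct_eq_zero {𝕜 n : Type*} [RCLike 𝕜]
    [Fintype n] {u v w : n → 𝕜} (hu : u ≠ 0) (hv : v ≠ 0) (hw : w ≠ 0)
    (huv : star u ⬝ᵥ v = 0) (huw : star u ⬝ᵥ w = 0) (hvw : star v ⬝ᵥ w = 0) :
    LinearIndependent 𝕜 ![u, v, w] := by
  have symm {x y : n → 𝕜} (h : star x ⬝ᵥ y = 0) : star y ⬝ᵥ x = 0 := by
    rw [star_dotProduct, h, star_zero]
  refine linearIndependent_of_ne_zero_of_star_dotProduct_eq_zero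
    (fun i => by fin_cases i <;> assumption) fun i j hij => ?_
  fin_cases i <;> fin_cases j <;> dsimp <;>
    first | exact absurd rfl hij | assumption | exact symm ‹_›

theorem Module.Dual.span_eq_ker_of_linearIndependent {K V : Type*} [Field K] [AddCommGroup V]
    [Module K V] [FiniteDimensional K V] {f : Module.Dual K V} (hf : f ≠ 0) {n : ℕ}
    {v : Fin n → V} (hv : LinearIndependent K v) (hn : n + 1 = Module.finrank K V)
    (hker : ∀ i, f (v i) = 0) : Submodule.span K (Set.range v) = LinearMap.ker f := by
  refine Submodule.eq_of_le_of_finrank_le (Submodule.span_le.2 ?_) ?_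
  · rintro _ ⟨i, rfl⟩
    exact hker i
  · rw [finrank_span_eq_card hv, Fintype.card_fin]
    have := f.finrank_ker_add_one_of_ne_zero hf
    omega

theorem map_ofReal_mulVec_star {m n : Type*} [Fintype n] (M : Matrix m n ℝ) (v : n → ℂ) :
    M.map ((↑) : ℝ → ℂ) *ᵥ star v = star (M.map ((↑) : ℝ → ℂ) *ᵥ v) := by
  ext i
  simp [mulVec, dotProduct]

def divergence (ξ1 ξ2 ξ3 : ℝ) : Module.Dual ℂ (Fin 4 → ℂ) :=
  (ξ1 : ℂ) • LinearMap.proj 0 + (ξ2 : ℂ) • LinearMap.proj 1 + (ξ3 : ℂ) • LinearMap.proj 2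

theorem divergence_apply (ξ1 ξ2 ξ3 : ℝ) (v : Fin 4 → ℂ) :
    divergence ξ1 ξ2 ξ3 v = ξ1 * v 0 + ξ2 * v 1 + ξ3 * v 2 := rfl

theorem divergence_star (ξ1 ξ2 ξ3 : ℝ) (v : Fin 4 → ℂ) :
    divergence ξ1 ξ2 ξ3 (star v) = star (divergence ξ1 ξ2 ξ3 v) := by
  simp [divergence_apply]

theorem divergence_ne_zero {ξ1 ξ2 ξ3 : ℝ} (hξ : ¬(ξ1 = 0 ∧ ξ2 = 0 ∧ ξ3 = 0)) :
    divergence ξ1 ξ2 ξ3 ≠ 0 := by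
  intro h
  have hsingle (i : Fin 4) : divergence ξ1 ξ2 ξ3 (Pi.single i 1) = 0 := by rw [h]; rfl
  exact hξ ⟨by simpa [divergence_apply] using hsingle 0,
    by simpa [divergence_apply] using hsingle 1, by simpa [divergence_apply] using hsingle 2⟩

noncomputable def waveEigenvalue (ν ε F ξ1 ξ2 ξ3 : ℝ) : ℂ :=
  ((-ν * (ξ1 ^ 2 + ξ2 ^ 2 + ξ3 ^ 2) : ℝ) : ℂ) +
    I * ((√(ξ1 ^ 2 + ξ2 ^ 2 + F ^ 2 * ξ3 ^ 2) / (ε * F * √(ξ1 ^ 2 + ξ2 ^ 2 + ξ3 ^ 2)) : ℝ) : ℂ)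

def geostrophicMode (F ξ1 ξ2 ξ3 : ℝ) : Fin 4 → ℂ := ![ξ2, -ξ1, 0, F * ξ3]

def inertiaGravityMode (F r ξ1 ξ2 ξ3 : ℝ) : Fin 4 → ℂ :=
  ![-ξ3 * (F * ξ2 + I * r * ξ1), ξ3 * (F * ξ1 - I * r * ξ2), I * r * (ξ1 ^ 2 + ξ2 ^ 2),
    ξ1 ^ 2 + ξ2 ^ 2]

section Modes

variable {ν ε F r ξ1 ξ2 ξ3 : ℝ}

theorem star_geostrophicMode :
    star (geostrophicMode F ξ1 ξ2 ξ3) = geostrophicMode F ξ1 ξ2 ξ3 := by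
  ext k
  fin_cases k <;> simp [geostrophicMode]

theorem geostrophicMode_ne_zero (hF : F ≠ 0) (hξ : ¬(ξ1 = 0 ∧ ξ2 = 0 ∧ ξ3 = 0)) :
    geostrophicMode F ξ1 ξ2 ξ3 ≠ 0 := by
  intro h
  have h0 := congrFun h 0
  have h1 := congrFun h 1
  have h3 := congrFun h 3
  simp [geostrophicMode, hF] at h0 h1 h3
  exact hξ ⟨h1, h0, h3⟩

theorem divergence_geostrophicMode : divergence ξ1 ξ2 ξ3 (geostrophicMode F ξ1 ξ2 ξ3) = 0 := by
  simp [divergence_apply, geostrophicMode]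
  ring

theorem BmatC_mulVec_geostrophicMode (hε : ε ≠ 0) (hF : F ≠ 0)
    (hξ : ξ1 ^ 2 + ξ2 ^ 2 + ξ3 ^ 2 ≠ 0) :
    BmatC ν ε F ξ1 ξ2 ξ3 *ᵥ geostrophicMode F ξ1 ξ2 ξ3 =
      ((-ν * (ξ1 ^ 2 + ξ2 ^ 2 + ξ3 ^ 2) : ℝ) : ℂ) • geostrophicMode F ξ1 ξ2 ξ3 := by
  have hξC : (ξ1 : ℂ) ^ 2 + ξ2 ^ 2 + ξ3 ^ 2 ≠ 0 := by exact_mod_cast hξ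
  have hεC : (ε : ℂ) ≠ 0 := by exact_mod_cast hε
  have hFC : (F : ℂ) ≠ 0 := by exact_mod_cast hF
  ext k
  fin_cases k <;>
    simp [BmatC, Bmat, geostrophicMode, mulVec, dotProduct, Fin.sum_univ_four] <;>
    field_simp <;> ring

theorem inertiaGravityMode_ne_zero (hξ : ξ1 ^ 2 + ξ2 ^ 2 ≠ 0) :
    inertiaGravityMode F r ξ1 ξ2 ξ3 ≠ 0 := by
  intro h
  have h3 := congrFun h 3
  simp [inertiaGravityMode] at h3
  exact hξ (by exact_mod_cast h3)

theorem divergence_inertiaGravityMode :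
    divergence ξ1 ξ2 ξ3 (inertiaGravityMode F r ξ1 ξ2 ξ3) = 0 := by
  simp [divergence_apply, inertiaGravityMode]
  ring

theorem star_geostrophicMode_dotProduct_inertiaGravityMode :
    star (geostrophicMode F ξ1 ξ2 ξ3) ⬝ᵥ inertiaGravityMode F r ξ1 ξ2 ξ3 = 0 := by
  simp [geostrophicMode, inertiaGravityMode, dotProduct, Fin.sum_univ_four]
  ring

theorem inertiaGravityMode_dotProduct_self
    (hr : r ^ 2 * (ξ1 ^ 2 + ξ2 ^ 2 + ξ3 ^ 2) = ξ1 ^ 2 + ξ2 ^ 2 + F ^ 2 * ξ3 ^ 2) :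
    inertiaGravityMode F r ξ1 ξ2 ξ3 ⬝ᵥ inertiaGravityMode F r ξ1 ξ2 ξ3 = 0 := by
  have hrC : (r : ℂ) ^ 2 * (ξ1 ^ 2 + ξ2 ^ 2 + ξ3 ^ 2) = ξ1 ^ 2 + ξ2 ^ 2 + F ^ 2 * ξ3 ^ 2 := by
    exact_mod_cast congrArg ((↑) : ℝ → ℂ) hr
  simp [inertiaGravityMode, dotProduct, Fin.sum_univ_four]
  grind [I_sq]

theorem BmatC_mulVec_inertiaGravityMode (hε : ε ≠ 0) (hF : F ≠ 0)
    (hξ : ξ1 ^ 2 + ξ2 ^ 2 + ξ3 ^ 2 ≠ 0)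
    (hr : r ^ 2 * (ξ1 ^ 2 + ξ2 ^ 2 + ξ3 ^ 2) = ξ1 ^ 2 + ξ2 ^ 2 + F ^ 2 * ξ3 ^ 2) :
    BmatC ν ε F ξ1 ξ2 ξ3 *ᵥ inertiaGravityMode F r ξ1 ξ2 ξ3 =
      ((-ν * (ξ1 ^ 2 + ξ2 ^ 2 + ξ3 ^ 2) : ℝ) + I * (r / (ε * F) : ℝ)) •
        inertiaGravityMode F r ξ1 ξ2 ξ3 := by
  have hξC : (ξ1 : ℂ) ^ 2 + ξ2 ^ 2 + ξ3 ^ 2 ≠ 0 := by exact_mod_cast hξ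
  have hεC : (ε : ℂ) ≠ 0 := by exact_mod_cast hε
  have hFC : (F : ℂ) ≠ 0 := by exact_mod_cast hF
  have hrC : (r : ℂ) ^ 2 * (ξ1 ^ 2 + ξ2 ^ 2 + ξ3 ^ 2) = ξ1 ^ 2 + ξ2 ^ 2 + F ^ 2 * ξ3 ^ 2 := by
    exact_mod_cast congrArg ((↑) : ℝ → ℂ) hr
  ext k
  fin_cases k <;>
    simp [BmatC, Bmat, inertiaGravityMode, mulVec, dotProduct, Fin.sum_univ_four] <;>
    field_simp <;> grind [I_sq]

theorem BmatC_mulVec_circularMode (hε : ε ≠ 0) (hξ3 : ξ3 ≠ 0) :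
    BmatC ν ε F 0 0 ξ3 *ᵥ ![1, I, 0, 0] =
      ((-ν * ξ3 ^ 2 : ℝ) + I * (ε⁻¹ : ℝ)) • ![1, I, 0, 0] := by
  have hεC : (ε : ℂ) ≠ 0 := by exact_mod_cast hε
  have hξC : (ξ3 : ℂ) ≠ 0 := by exact_mod_cast hξ3
  ext k
  fin_cases k <;> simp [BmatC, Bmat, mulVec, dotProduct, Fin.sum_univ_four]
  · field_simp
  · field_simp
    linear_combination -I_sq

theorem exists_waveEigenvalue_eigenvector (hε : ε ≠ 0) (hF : 0 < F)
    (hξ : ¬(ξ1 = 0 ∧ ξ2 = 0 ∧ ξ3 = 0)) :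
    ∃ w : Fin 4 → ℂ, w ≠ 0 ∧ divergence ξ1 ξ2 ξ3 w = 0 ∧
      star (geostrophicMode F ξ1 ξ2 ξ3) ⬝ᵥ w = 0 ∧ w ⬝ᵥ w = 0 ∧
      BmatC ν ε F ξ1 ξ2 ξ3 *ᵥ w = waveEigenvalue ν ε F ξ1 ξ2 ξ3 • w := by
  have hs := sq_add_sq_add_sq_pos hξ
  set r := √(ξ1 ^ 2 + ξ2 ^ 2 + F ^ 2 * ξ3 ^ 2) / √(ξ1 ^ 2 + ξ2 ^ 2 + ξ3 ^ 2) with hr_def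
  have hr : r ^ 2 * (ξ1 ^ 2 + ξ2 ^ 2 + ξ3 ^ 2) = ξ1 ^ 2 + ξ2 ^ 2 + F ^ 2 * ξ3 ^ 2 := by
    rw [div_pow, Real.sq_sqrt (by positivity), Real.sq_sqrt hs.le, div_mul_cancel₀ _ hs.ne']
  have hlam : waveEigenvalue ν ε F ξ1 ξ2 ξ3 =
      ((-ν * (ξ1 ^ 2 + ξ2 ^ 2 + ξ3 ^ 2) : ℝ) + I * (r / (ε * F) : ℝ)) := by
    rw [waveEigenvalue, hr_def, div_div, mul_comm (√_)]
  rw [hlam]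
  by_cases hh : ξ1 = 0 ∧ ξ2 = 0
  · obtain ⟨rfl, rfl⟩ := hh
    have hξ3 : ξ3 ≠ 0 := fun h => hξ ⟨rfl, rfl, h⟩
    have hrF : r = F := (sq_eq_sq₀ (by positivity) hF.le).1 (by simpa [hξ3] using hr)
    refine ⟨![1, I, 0, 0], fun h => by simpa using congrFun h 0, by simp [divergence_apply],
      by simp [geostrophicMode, dotProduct, Fin.sum_univ_four],
      by simp [dotProduct, Fin.sum_univ_four], ?_⟩
    rw [BmatC_mulVec_circularMode hε hξ3, hrF, div_mul_cancel_right₀ hF.ne']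
    simp
  · exact ⟨inertiaGravityMode F r ξ1 ξ2 ξ3, inertiaGravityMode_ne_zero (sq_add_sq_pos hh).ne',
      divergence_inertiaGravityMode, star_geostrophicMode_dotProduct_inertiaGravityMode,
      inertiaGravityMode_dotProduct_self hr, BmatC_mulVec_inertiaGravityMode hε hF.ne' hs.ne' hr⟩

end Modes

theorem diagonalization_on_divfree_general
    (ν ε F ξ1 ξ2 ξ3 : ℝ) (hε : 0 < ε) (hF : 0 < F)
    (hξ : ¬(ξ1 = 0 ∧ ξ2 = 0 ∧ ξ3 = 0)) :
    ∃ v2 v3 v4 : Fin 4 → ℂ,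
      v2 ≠ 0 ∧ v3 ≠ 0 ∧ v4 ≠ 0 ∧
      (∑ k, starRingEnd ℂ (v2 k) * v3 k = 0) ∧
      (∑ k, starRingEnd ℂ (v2 k) * v4 k = 0) ∧
      (∑ k, starRingEnd ℂ (v3 k) * v4 k = 0) ∧
      ((ξ1 : ℂ) * v2 0 + (ξ2 : ℂ) * v2 1 + (ξ3 : ℂ) * v2 2 = 0) ∧
      ((ξ1 : ℂ) * v3 0 + (ξ2 : ℂ) * v3 1 + (ξ3 : ℂ) * v3 2 = 0) ∧
      ((ξ1 : ℂ) * v4 0 + (ξ2 : ℂ) * v4 1 + (ξ3 : ℂ) * v4 2 = 0) ∧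
      (∀ v : Fin 4 → ℂ,
        (ξ1 : ℂ) * v 0 + (ξ2 : ℂ) * v 1 + (ξ3 : ℂ) * v 2 = 0 ↔
          v ∈ Submodule.span ℂ ({v2, v3, v4} : Set (Fin 4 → ℂ))) ∧
      (BmatC ν ε F ξ1 ξ2 ξ3).mulVec v2 =
        (((-ν * (ξ1^2 + ξ2^2 + ξ3^2) : ℝ) : ℂ)) • v2 ∧
      (BmatC ν ε F ξ1 ξ2 ξ3).mulVec v3 =
        (((-ν * (ξ1^2 + ξ2^2 + ξ3^2) : ℝ) : ℂ) +
          Complex.I * ((Real.sqrt (ξ1^2 + ξ2^2 + F^2 * ξ3^2) /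
            (ε * F * Real.sqrt (ξ1^2 + ξ2^2 + ξ3^2)) : ℝ) : ℂ)) • v3 ∧
      (BmatC ν ε F ξ1 ξ2 ξ3).mulVec v4 =
        (starRingEnd ℂ (((-ν * (ξ1^2 + ξ2^2 + ξ3^2) : ℝ) : ℂ) +
          Complex.I * ((Real.sqrt (ξ1^2 + ξ2^2 + F^2 * ξ3^2) /
            (ε * F * Real.sqrt (ξ1^2 + ξ2^2 + ξ3^2)) : ℝ) : ℂ))) • v4 := by
  set v := geostrophicMode F ξ1 ξ2 ξ3
  obtain ⟨w, hw, hdiv_w, hvw, hww, hBw⟩ :=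
    exists_waveEigenvalue_eigenvector (ν := ν) hε.ne' hF hξ
  have hv : v ≠ 0 := geostrophicMode_ne_zero hF.ne' hξ
  have hv_star : star v = v := star_geostrophicMode
  have hdiv_v : divergence ξ1 ξ2 ξ3 v = 0 := divergence_geostrophicMode
  have hw' : star w ≠ 0 := star_ne_zero.2 hw
  have hdiv_w' : divergence ξ1 ξ2 ξ3 (star w) = 0 := by rw [divergence_star, hdiv_w, star_zero]
  have hvw' : star v ⬝ᵥ star w = 0 := by
    rw [hv_star, dotProduct_star, dotProduct_comm, hvw, star_zero]
  have hww' : star w ⬝ᵥ star w = 0 := by rw [star_dotProduct_star, hww, star_zero]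
  have hspan := Module.Dual.span_eq_ker_of_linearIndependent (divergence_ne_zero hξ)
    (linearIndependent_fin3_of_star_dotProduct_eq_zero hv hw hw' hvw hvw' hww') (by simp)
    (by simp [Fin.forall_fin_succ, hdiv_v, hdiv_w, hdiv_w'])
  refine ⟨v, w, star w, hv, hw, hw', hvw, hvw', hww', hdiv_v, hdiv_w, hdiv_w', fun x => ?_,
    BmatC_mulVec_geostrophicMode hε.ne' hF.ne' (sq_add_sq_add_sq_pos hξ).ne', hBw, ?_⟩
  · rw [← range_cons_cons_empty, ← Set.singleton_union, ← range_cons, hspan]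
    rfl
  · rw [BmatC, map_ofReal_mulVec_star, ← BmatC, hBw, star_smul]
    rfl

/-- `B(ξ,ε)` restricted to the divergence-free subspace is diagonalizable over `ℂ`
with eigenvalues `μ = −ν|ξ|²`, `λ = −ν|ξ|² + i|ξ|_F/(εF|ξ|)` and `λ̄`: there is an
orthogonal basis of divergence-free eigenvectors spanning that subspace. -/
theorem diagonalization_on_divfree
    (ν ε F ξ1 ξ2 ξ3 : ℝ) (hν : 0 < ν) (hε : 0 < ε) (hF : 0 < F)
    (hξ : ¬(ξ1 = 0 ∧ ξ2 = 0 ∧ ξ3 = 0)) :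
    ∃ v2 v3 v4 : Fin 4 → ℂ,
      v2 ≠ 0 ∧ v3 ≠ 0 ∧ v4 ≠ 0 ∧
      (∑ k, starRingEnd ℂ (v2 k) * v3 k = 0) ∧
      (∑ k, starRingEnd ℂ (v2 k) * v4 k = 0) ∧
      (∑ k, starRingEnd ℂ (v3 k) * v4 k = 0) ∧
      ((ξ1 : ℂ) * v2 0 + (ξ2 : ℂ) * v2 1 + (ξ3 : ℂ) * v2 2 = 0) ∧
      ((ξ1 : ℂ) * v3 0 + (ξ2 : ℂ) * v3 1 + (ξ3 : ℂ) * v3 2 = 0) ∧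
      ((ξ1 : ℂ) * v4 0 + (ξ2 : ℂ) * v4 1 + (ξ3 : ℂ) * v4 2 = 0) ∧
      (∀ v : Fin 4 → ℂ,
        (ξ1 : ℂ) * v 0 + (ξ2 : ℂ) * v 1 + (ξ3 : ℂ) * v 2 = 0 ↔
          v ∈ Submodule.span ℂ ({v2, v3, v4} : Set (Fin 4 → ℂ))) ∧
      (BmatC ν ε F ξ1 ξ2 ξ3).mulVec v2 =
        (((-ν * (ξ1^2 + ξ2^2 + ξ3^2) : ℝ) : ℂ)) • v2 ∧
      (BmatC ν ε F ξ1 ξ2 ξ3).mulVec v3 =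
        (((-ν * (ξ1^2 + ξ2^2 + ξ3^2) : ℝ) : ℂ) +
          Complex.I * ((Real.sqrt (ξ1^2 + ξ2^2 + F^2 * ξ3^2) /
            (ε * F * Real.sqrt (ξ1^2 + ξ2^2 + ξ3^2)) : ℝ) : ℂ)) • v3 ∧
      (BmatC ν ε F ξ1 ξ2 ξ3).mulVec v4 =
        (starRingEnd ℂ (((-ν * (ξ1^2 + ξ2^2 + ξ3^2) : ℝ) : ℂ) +
          Complex.I * ((Real.sqrt (ξ1^2 + ξ2^2 + F^2 * ξ3^2) /
            (ε * F * Real.sqrt (ξ1^2 + ξ2^2 + ξ3^2)) : ℝ) : ℂ))) • v4 :=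
  diagonalization_on_divfree_general ν ε F ξ1 ξ2 ξ3 hε hF hξ
end

section
/- For every z∈ℂ, the characteristic polynomial of (the complexification of) B(ξ,ε) satisfies det(z·I₄ − B(ξ,ε)) = (z+ν|ξ|²)² · ((z+ν|ξ|²)² + |ξ|_F²/(ε²F²|ξ|²)). In particular the eigenvalues of B(ξ,ε) over ℂ, counted with multiplicity, are −ν|ξ|² (twice) and −ν|ξ|² ± i|ξ|_F/(εF|ξ|). -/
open Matrix

/-!
Clearing the denominators, `B(ξ,ε) = −ν|ξ|²·I + (εF|ξ|²)⁻¹·R` with `R` a matrix whose entries are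
polynomials in `F` and `ξ`. Hence `det(z·I − B) = det(s·I − d·R)` with `s = z + ν|ξ|²` and
`d = (εF|ξ|²)⁻¹`, and a cofactor expansion gives the polynomial identity
`det(s·I − d·R) = s²(s² + d²|ξ|²|ξ|_F²)`. The eigenvalues are then the roots of `s²(s² + w²)`
with `w = |ξ|_F/(εF|ξ|)`.
-/

section RotationSymbol

variable {R : Type*} [CommRing R]

def rotationSymbol (F x y t : R) : Matrix (Fin 4) (Fin 4) R :=
  !![F * x * y, F * (y^2 + t^2), 0, x * t;
     -(F * (x^2 + t^2)), -(F * x * y), 0, y * t;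
     F * y * t, -(F * x * t), 0, -(x^2 + y^2);
     0, 0, x^2 + y^2 + t^2, 0]

theorem det_smul_one_sub_smul_rotationSymbol (s d F x y t : R) :
    (s • (1 : Matrix (Fin 4) (Fin 4) R) - d • rotationSymbol F x y t).det =
      s^2 * (s^2 + d^2 * (x^2 + y^2 + t^2) * (x^2 + y^2 + F^2 * t^2)) := by
  simp [rotationSymbol, det_succ_row_zero, Fin.sum_univ_succ, Matrix.one_apply, Fin.succAbove]
  ring

theorem rotationSymbol_map {S : Type*} [CommRing S] (f : R →+* S) (F x y t : R) :
    (rotationSymbol F x y t).map f = rotationSymbol (f F) (f x) (f y) (f t) := by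
  ext i j
  fin_cases i <;> fin_cases j <;> simp [rotationSymbol]

end RotationSymbol

section Bmat

variable {ν ε F ξ1 ξ2 ξ3 : ℝ}

theorem Bmat_eq_smul_one_add_smul_rotationSymbol (hε : ε ≠ 0) (hF : F ≠ 0)
    (hξ : ξ1^2 + ξ2^2 + ξ3^2 ≠ 0) :
    Bmat ν ε F ξ1 ξ2 ξ3 = (-(ν * (ξ1^2 + ξ2^2 + ξ3^2))) • 1 +
      (ε * F * (ξ1^2 + ξ2^2 + ξ3^2))⁻¹ • rotationSymbol F ξ1 ξ2 ξ3 := by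
  ext i j
  fin_cases i <;> fin_cases j <;> simp [Bmat, rotationSymbol] <;> field_simp <;> ring

theorem det_smul_one_sub_BmatC (hε : ε ≠ 0) (hF : F ≠ 0) (hξ : ξ1^2 + ξ2^2 + ξ3^2 ≠ 0) (z : ℂ) :
    (z • (1 : Matrix (Fin 4) (Fin 4) ℂ) - BmatC ν ε F ξ1 ξ2 ξ3).det =
      (z + ((ν * (ξ1^2 + ξ2^2 + ξ3^2) : ℝ) : ℂ))^2 *
        ((z + ((ν * (ξ1^2 + ξ2^2 + ξ3^2) : ℝ) : ℂ))^2 +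
          ((ξ1^2 + ξ2^2 + F^2 * ξ3^2 : ℝ) : ℂ) /
            ((ε^2 * F^2 * (ξ1^2 + ξ2^2 + ξ3^2) : ℝ) : ℂ)) := by
  have hBC : BmatC ν ε F ξ1 ξ2 ξ3 = ((-(ν * (ξ1^2 + ξ2^2 + ξ3^2)) : ℝ) : ℂ) • 1 +
      (((ε * F * (ξ1^2 + ξ2^2 + ξ3^2))⁻¹ : ℝ) : ℂ) • rotationSymbol (F : ℂ) ξ1 ξ2 ξ3 := by
    rw [BmatC, Bmat_eq_smul_one_add_smul_rotationSymbol hε hF hξ, Matrix.map_add,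
      Matrix.map_smul', Matrix.map_smul', Matrix.map_one]
    · exact congrArg (_ + _ • ·) (rotationSymbol_map Complex.ofRealHom F ξ1 ξ2 ξ3)
    all_goals simp
  rw [hBC, sub_add_eq_sub_sub, ← sub_smul, det_smul_one_sub_smul_rotationSymbol]
  have hεC : (ε : ℂ) ≠ 0 := by exact_mod_cast hε
  have hFC : (F : ℂ) ≠ 0 := by exact_mod_cast hF
  have hξC : (ξ1 : ℂ)^2 + ξ2^2 + ξ3^2 ≠ 0 := by exact_mod_cast hξ
  push_cast
  field_simp
  ring

end Bmat
theorem sq_mul_sq_add_sq_eq_zero {a w z : ℂ}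
    (hz : z = -a ∨ z = -a + Complex.I * w ∨ z = -a - Complex.I * w) :
    (z + a)^2 * ((z + a)^2 + w^2) = 0 := by
  rcases hz with rfl | rfl | rfl <;> ring_nf <;> simp [Complex.I_sq]

theorem char_poly_Bmat_general
    (ν ε F ξ1 ξ2 ξ3 : ℝ) (hε : 0 < ε) (hF : 0 < F)
    (hξ : ¬(ξ1 = 0 ∧ ξ2 = 0 ∧ ξ3 = 0)) :
    (∀ z : ℂ,
      (z • (1 : Matrix (Fin 4) (Fin 4) ℂ) - BmatC ν ε F ξ1 ξ2 ξ3).det =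
        (z + ((ν * (ξ1^2 + ξ2^2 + ξ3^2) : ℝ) : ℂ))^2 *
          ((z + ((ν * (ξ1^2 + ξ2^2 + ξ3^2) : ℝ) : ℂ))^2 +
            ((ξ1^2 + ξ2^2 + F^2 * ξ3^2 : ℝ) : ℂ) /
              ((ε^2 * F^2 * (ξ1^2 + ξ2^2 + ξ3^2) : ℝ) : ℂ))) ∧
    (∀ z : ℂ,
      (z = ((-ν * (ξ1^2 + ξ2^2 + ξ3^2) : ℝ) : ℂ) ∨
        z = ((-ν * (ξ1^2 + ξ2^2 + ξ3^2) : ℝ) : ℂ) +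
          Complex.I * ((Real.sqrt (ξ1^2 + ξ2^2 + F^2 * ξ3^2) /
            (ε * F * Real.sqrt (ξ1^2 + ξ2^2 + ξ3^2)) : ℝ) : ℂ) ∨
        z = ((-ν * (ξ1^2 + ξ2^2 + ξ3^2) : ℝ) : ℂ) -
          Complex.I * ((Real.sqrt (ξ1^2 + ξ2^2 + F^2 * ξ3^2) /
            (ε * F * Real.sqrt (ξ1^2 + ξ2^2 + ξ3^2)) : ℝ) : ℂ)) →
      (z • (1 : Matrix (Fin 4) (Fin 4) ℂ) - BmatC ν ε F ξ1 ξ2 ξ3).det = 0) := by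
  have hq : ξ1^2 + ξ2^2 + ξ3^2 ≠ 0 := by
    contrapose! hξ
    refine ⟨?_, ?_, ?_⟩ <;> apply (pow_eq_zero_iff two_ne_zero).mp <;>
      linarith [sq_nonneg ξ1, sq_nonneg ξ2, sq_nonneg ξ3]
  have hdet := det_smul_one_sub_BmatC (ν := ν) hε.ne' hF.ne' hq
  refine ⟨hdet, fun z hz => ?_⟩
  have hw : ((Real.sqrt (ξ1^2 + ξ2^2 + F^2 * ξ3^2) /
      (ε * F * Real.sqrt (ξ1^2 + ξ2^2 + ξ3^2)) : ℝ) : ℂ)^2 =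
      ((ξ1^2 + ξ2^2 + F^2 * ξ3^2 : ℝ) : ℂ) / ((ε^2 * F^2 * (ξ1^2 + ξ2^2 + ξ3^2) : ℝ) : ℂ) := by
    rw [← Complex.ofReal_pow, ← Complex.ofReal_div, div_pow, mul_pow, mul_pow, Real.sq_sqrt,
      Real.sq_sqrt] <;> positivity
  rw [neg_mul, Complex.ofReal_neg] at hz
  rw [hdet, ← hw]
  exact sq_mul_sq_add_sq_eq_zero hz

/-- The characteristic polynomial of (the complexification of) `B(ξ,ε)`:
`det(z·I₄ − B(ξ,ε)) = (z+ν|ξ|²)²((z+ν|ξ|²)² + |ξ|_F²/(ε²F²|ξ|²))`.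
In particular the complex eigenvalues, with multiplicity, are `−ν|ξ|²` (twice)
and `−ν|ξ|² ± i|ξ|_F/(εF|ξ|)`. -/
theorem char_poly_Bmat
    (ν ε F ξ1 ξ2 ξ3 : ℝ) (hν : 0 < ν) (hε : 0 < ε) (hF : 0 < F)
    (hξ : ¬(ξ1 = 0 ∧ ξ2 = 0 ∧ ξ3 = 0)) :
    (∀ z : ℂ,
      (z • (1 : Matrix (Fin 4) (Fin 4) ℂ) - BmatC ν ε F ξ1 ξ2 ξ3).det =
        (z + ((ν * (ξ1^2 + ξ2^2 + ξ3^2) : ℝ) : ℂ))^2 *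
          ((z + ((ν * (ξ1^2 + ξ2^2 + ξ3^2) : ℝ) : ℂ))^2 +
            ((ξ1^2 + ξ2^2 + F^2 * ξ3^2 : ℝ) : ℂ) /
              ((ε^2 * F^2 * (ξ1^2 + ξ2^2 + ξ3^2) : ℝ) : ℂ))) ∧
    (∀ z : ℂ,
      (z = ((-ν * (ξ1^2 + ξ2^2 + ξ3^2) : ℝ) : ℂ) ∨
        z = ((-ν * (ξ1^2 + ξ2^2 + ξ3^2) : ℝ) : ℂ) +
          Complex.I * ((Real.sqrt (ξ1^2 + ξ2^2 + F^2 * ξ3^2) /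
            (ε * F * Real.sqrt (ξ1^2 + ξ2^2 + ξ3^2)) : ℝ) : ℂ) ∨
        z = ((-ν * (ξ1^2 + ξ2^2 + ξ3^2) : ℝ) : ℂ) -
          Complex.I * ((Real.sqrt (ξ1^2 + ξ2^2 + F^2 * ξ3^2) /
            (ε * F * Real.sqrt (ξ1^2 + ξ2^2 + ξ3^2)) : ℝ) : ℂ)) →
      (z • (1 : Matrix (Fin 4) (Fin 4) ℂ) - BmatC ν ε F ξ1 ξ2 ξ3).det = 0) :=
  char_poly_Bmat_general ν ε F ξ1 ξ2 ξ3 hε hF hξ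
end

section
/- The function g_F: ℝ³∖{0}→ℝ defined by g_F(ξ) = |ξ|_F/|ξ| = √(ξ₁²+ξ₂²+F²ξ₃²)/√(ξ₁²+ξ₂²+ξ₃²) is smooth on ℝ³∖{0}, and for every ξ≠0 its Hessian matrix (∂ᵢ∂ⱼ g_F(ξ))_{1≤i,j≤3} is equal to the explicit matrix M(ξ). -/
open Matrix

/-- `g_F(ξ) = |ξ|_F/|ξ|`. -/
noncomputable def gF (F : ℝ) (x : Fin 3 → ℝ) : ℝ :=
  Real.sqrt (x 0 ^ 2 + x 1 ^ 2 + F ^ 2 * x 2 ^ 2) /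
    Real.sqrt (x 0 ^ 2 + x 1 ^ 2 + x 2 ^ 2)

/-- The explicit candidate Hessian matrix `M(ξ)` of `g_F`. -/
noncomputable def Mmat (F : ℝ) (x : Fin 3 → ℝ) : Matrix (Fin 3) (Fin 3) ℝ :=
  ((1 - F ^ 2) /
      ((Real.sqrt (x 0 ^ 2 + x 1 ^ 2 + x 2 ^ 2)) ^ 3 *
        Real.sqrt (x 0 ^ 2 + x 1 ^ 2 + F ^ 2 * x 2 ^ 2))) •
    !![x 2 ^ 2 * (1 - x 0 ^ 2 * (3 / (x 0 ^ 2 + x 1 ^ 2 + x 2 ^ 2) +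
        1 / (x 0 ^ 2 + x 1 ^ 2 + F ^ 2 * x 2 ^ 2))),
      -(x 0 * x 1 * x 2 ^ 2) * (3 / (x 0 ^ 2 + x 1 ^ 2 + x 2 ^ 2) +
        1 / (x 0 ^ 2 + x 1 ^ 2 + F ^ 2 * x 2 ^ 2)),
      x 0 * x 2 * (2 - x 2 ^ 2 * (3 / (x 0 ^ 2 + x 1 ^ 2 + x 2 ^ 2) +
        F ^ 2 / (x 0 ^ 2 + x 1 ^ 2 + F ^ 2 * x 2 ^ 2)));
      -(x 0 * x 1 * x 2 ^ 2) * (3 / (x 0 ^ 2 + x 1 ^ 2 + x 2 ^ 2) +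
        1 / (x 0 ^ 2 + x 1 ^ 2 + F ^ 2 * x 2 ^ 2)),
      x 2 ^ 2 * (1 - x 1 ^ 2 * (3 / (x 0 ^ 2 + x 1 ^ 2 + x 2 ^ 2) +
        1 / (x 0 ^ 2 + x 1 ^ 2 + F ^ 2 * x 2 ^ 2))),
      x 1 * x 2 * (2 - x 2 ^ 2 * (3 / (x 0 ^ 2 + x 1 ^ 2 + x 2 ^ 2) +
        F ^ 2 / (x 0 ^ 2 + x 1 ^ 2 + F ^ 2 * x 2 ^ 2)));
      x 0 * x 2 * (2 - x 2 ^ 2 * (3 / (x 0 ^ 2 + x 1 ^ 2 + x 2 ^ 2) +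
        F ^ 2 / (x 0 ^ 2 + x 1 ^ 2 + F ^ 2 * x 2 ^ 2))),
      x 1 * x 2 * (2 - x 2 ^ 2 * (3 / (x 0 ^ 2 + x 1 ^ 2 + x 2 ^ 2) +
        F ^ 2 / (x 0 ^ 2 + x 1 ^ 2 + F ^ 2 * x 2 ^ 2))),
      -(x 0 ^ 2 + x 1 ^ 2) * (1 - x 2 ^ 2 * (3 / (x 0 ^ 2 + x 1 ^ 2 + x 2 ^ 2) +
        F ^ 2 / (x 0 ^ 2 + x 1 ^ 2 + F ^ 2 * x 2 ^ 2)))]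

open Filter Topology

/-! Write `g_F = √P / √Q` with `P = |ξ|_F²` and `Q = |ξ|²`. The quotient rule gives
`∂_v g_F(ξ) = (1 - F²) ξ₃ (ξ₃ ⟨ξ_h, v_h⟩ - |ξ_h|² v₃) / (|ξ|_F |ξ|³)`, a polynomial over
`√P · √Q³`; one more quotient rule along the coordinate directions yields the entries of `M(ξ)`.
Both derivatives are computed along lines, which is enough because `g_F` is smooth off the origin. -/

/-- `anisoNormSq F ξ = |ξ|_F²` and `anisoNormSq 1 ξ = |ξ|²`. -/
noncomputable def anisoNormSq (F : ℝ) (y : Fin 3 → ℝ) : ℝ :=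
  y 0 ^ 2 + y 1 ^ 2 + F ^ 2 * y 2 ^ 2

theorem anisoNormSq_pos {F : ℝ} (hF : F ≠ 0) {y : Fin 3 → ℝ} (hy : y ≠ 0) :
    0 < anisoNormSq F y := by
  have hy' : y 0 ≠ 0 ∨ y 1 ≠ 0 ∨ y 2 ≠ 0 := by
    by_contra! h
    exact hy (funext fun i => by fin_cases i <;> simp [h])
  unfold anisoNormSq
  rcases hy' with h | h | h <;> positivity

theorem contDiff_anisoNormSq (F : ℝ) {n : WithTop ℕ∞} : ContDiff ℝ n (anisoNormSq F) := by
  unfold anisoNormSq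
  fun_prop

theorem hasDerivAt_add_smul_apply {ι : Type*} (x w : ι → ℝ) (k : ι) (t : ℝ) :
    HasDerivAt (fun s : ℝ => (x + s • w) k) (w k) t := by
  simpa using ((hasDerivAt_id t).mul_const (w k)).const_add (x k)

theorem hasLineDerivAt_anisoNormSq (F : ℝ) (x w : Fin 3 → ℝ) :
    HasLineDerivAt ℝ (anisoNormSq F) (2 * (x 0 * w 0 + x 1 * w 1 + F ^ 2 * x 2 * w 2)) x w := by
  have hc := hasDerivAt_add_smul_apply x w (t := 0)
  have h := (((hc 0).pow 2).add ((hc 1).pow 2)).add (((hc 2).pow 2).const_mul (F ^ 2))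
  refine (h.congr_deriv ?_).congr_of_eventuallyEq (.of_forall fun t => ?_)
  · simp only [zero_smul, Pi.add_apply, Pi.zero_apply, add_zero, Nat.cast_ofNat,
      Nat.add_one_sub_one, pow_one]
    ring
  · simp [anisoNormSq]

section LineDeriv

variable {E : Type*} [NormedAddCommGroup E] [NormedSpace ℝ E] {p q n : E → ℝ} {p' q' n' : ℝ}
  {x v : E}

theorem HasLineDerivAt.sqrt_div_sqrt (hp : HasLineDerivAt ℝ p p' x v)
    (hq : HasLineDerivAt ℝ q q' x v) (hpx : 0 < p x) (hqx : 0 < q x) :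
    HasLineDerivAt ℝ (fun y => √(p y) / √(q y))
      ((p' * q x - p x * q') / (2 * √(p x) * √(q x) * q x)) x v := by
  unfold HasLineDerivAt at *
  have hsq := Real.sqrt_pos.2 hqx
  refine ((hp.sqrt (by simpa using hpx.ne')).div (hq.sqrt (by simpa using hqx.ne'))
    (by simpa using hsq.ne')).congr_deriv ?_
  have hp2 := Real.sq_sqrt hpx.le
  have hq2 := Real.sq_sqrt hqx.le
  simp only [zero_smul, add_zero]
  set a := √(p x)
  set b := √(q x)
  rw [← hp2, ← hq2]
  field_simp

theorem HasLineDerivAt.div_sqrt_mul_sqrt_pow_three (hn : HasLineDerivAt ℝ n n' x v)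
    (hp : HasLineDerivAt ℝ p p' x v) (hq : HasLineDerivAt ℝ q q' x v)
    (hpx : 0 < p x) (hqx : 0 < q x) :
    HasLineDerivAt ℝ (fun y => n y / (√(p y) * √(q y) ^ 3))
      ((n' - n x * (p' / (2 * p x) + 3 * q' / (2 * q x))) / (√(p x) * √(q x) ^ 3)) x v := by
  unfold HasLineDerivAt at *
  have hsp := Real.sqrt_pos.2 hpx
  have hsq := Real.sqrt_pos.2 hqx
  refine (hn.div ((hp.sqrt (by simpa using hpx.ne')).mul ((hq.sqrt (by simpa using hqx.ne')).pow 3))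
    (by simp only [Pi.mul_apply, Pi.pow_apply, zero_smul, add_zero]; positivity)).congr_deriv ?_
  have hp2 := Real.sq_sqrt hpx.le
  have hq2 := Real.sq_sqrt hqx.le
  simp only [Pi.mul_apply, Pi.pow_apply, zero_smul, add_zero, Nat.cast_ofNat]
  set a := √(p x)
  set b := √(q x)
  rw [← hp2, ← hq2]
  field_simp
  ring

end LineDeriv

section gF

variable {F : ℝ} {x : Fin 3 → ℝ}

theorem gF_eq_sqrt_div_sqrt (F : ℝ) :
    gF F = fun y => √(anisoNormSq F y) / √(anisoNormSq 1 y) := by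
  funext y
  simp [gF, anisoNormSq]

theorem contDiffAt_gF (hF : F ≠ 0) (hx : x ≠ 0) {n : WithTop ℕ∞} : ContDiffAt ℝ n (gF F) x := by
  rw [gF_eq_sqrt_div_sqrt]
  have hQ := anisoNormSq_pos one_ne_zero hx
  exact ((contDiff_anisoNormSq F).contDiffAt.sqrt (anisoNormSq_pos hF hx).ne').div
    ((contDiff_anisoNormSq 1).contDiffAt.sqrt hQ.ne') (Real.sqrt_pos.2 hQ).ne'

noncomputable def gFLineDerivNumerator (F : ℝ) (v y : Fin 3 → ℝ) : ℝ :=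
  (1 - F ^ 2) * y 2 * (y 2 * (y 0 * v 0 + y 1 * v 1) - (y 0 ^ 2 + y 1 ^ 2) * v 2)

noncomputable def gFLineDeriv (F : ℝ) (v y : Fin 3 → ℝ) : ℝ :=
  gFLineDerivNumerator F v y / (√(anisoNormSq F y) * √(anisoNormSq 1 y) ^ 3)

theorem hasLineDerivAt_gF (hF : F ≠ 0) (hx : x ≠ 0) (v : Fin 3 → ℝ) :
    HasLineDerivAt ℝ (gF F) (gFLineDeriv F v x) x v := by
  rw [gF_eq_sqrt_div_sqrt]
  have hP := anisoNormSq_pos hF hx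
  have hQ := anisoNormSq_pos one_ne_zero hx
  refine HasDerivAt.congr_deriv ((hasLineDerivAt_anisoNormSq F x v).sqrt_div_sqrt
    (hasLineDerivAt_anisoNormSq 1 x v) hP hQ) ?_
  have hQ2 := Real.sq_sqrt hQ.le
  have hsQ := Real.sqrt_pos.2 hQ
  unfold gFLineDeriv gFLineDerivNumerator
  field_simp
  rw [hQ2]
  unfold anisoNormSq
  ring

theorem fderiv_gF_apply (hF : F ≠ 0) (hx : x ≠ 0) (v : Fin 3 → ℝ) :
    fderiv ℝ (gF F) x v = gFLineDeriv F v x := by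
  rw [← ((contDiffAt_gF hF hx (n := 1)).differentiableAt one_ne_zero).lineDeriv_eq_fderiv]
  exact (hasLineDerivAt_gF hF hx v).lineDeriv

theorem hasLineDerivAt_gFLineDerivNumerator (F : ℝ) (v x w : Fin 3 → ℝ) :
    HasLineDerivAt ℝ (gFLineDerivNumerator F v)
      ((1 - F ^ 2) * (w 2 * (x 2 * (x 0 * v 0 + x 1 * v 1) - (x 0 ^ 2 + x 1 ^ 2) * v 2) +
        x 2 * (w 2 * (x 0 * v 0 + x 1 * v 1) + x 2 * (w 0 * v 0 + w 1 * v 1) -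
          2 * (x 0 * w 0 + x 1 * w 1) * v 2))) x w := by
  have hc := hasDerivAt_add_smul_apply x w (t := 0)
  have h := ((hc 2).mul (((hc 2).mul (((hc 0).mul_const (v 0)).add ((hc 1).mul_const (v 1)))).sub
    ((((hc 0).pow 2).add ((hc 1).pow 2)).mul_const (v 2)))).const_mul (1 - F ^ 2)
  refine (h.congr_deriv ?_).congr_of_eventuallyEq (.of_forall fun t => ?_)
  · simp only [zero_smul, add_zero, Pi.add_apply, Pi.mul_apply, Pi.sub_apply, Pi.pow_apply,
      Pi.smul_apply, smul_eq_mul, Pi.zero_apply, Nat.cast_ofNat]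
    ring
  · simp only [gFLineDerivNumerator, Pi.add_apply, Pi.smul_apply, smul_eq_mul, Pi.pow_apply,
      Pi.mul_apply, Pi.sub_apply]
    ring

theorem hasLineDerivAt_gFLineDeriv_single (hF : F ≠ 0) (hx : x ≠ 0) (i j : Fin 3) :
    HasLineDerivAt ℝ (gFLineDeriv F (Pi.single j 1)) (Mmat F x i j) x (Pi.single i 1) := by
  have hP := anisoNormSq_pos hF hx
  have hQ := anisoNormSq_pos one_ne_zero hx
  refine HasDerivAt.congr_deriv
    ((hasLineDerivAt_gFLineDerivNumerator F _ x _).div_sqrt_mul_sqrt_pow_three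
      (hasLineDerivAt_anisoNormSq F x _) (hasLineDerivAt_anisoNormSq 1 x _) hP hQ) ?_
  have hP' : x 0 ^ 2 + x 1 ^ 2 + F ^ 2 * x 2 ^ 2 = anisoNormSq F x := rfl
  have hQ' : x 0 ^ 2 + x 1 ^ 2 + x 2 ^ 2 = anisoNormSq 1 x := by simp [anisoNormSq]
  simp only [Mmat, hP', hQ']
  fin_cases i <;> fin_cases j <;>
    simp [gFLineDerivNumerator] <;> field_simp <;> unfold anisoNormSq <;> ring

end gF

/-- `g_F` is smooth away from the origin, and its Hessian matrix at every `ξ ≠ 0`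
is the explicit matrix `M(ξ)`. -/
theorem gF_smooth_and_hessian (F : ℝ) (hF : 0 < F) :
    ContDiffOn ℝ (⊤ : ℕ∞) (gF F) {x : Fin 3 → ℝ | x ≠ 0} ∧
    ∀ x : Fin 3 → ℝ, x ≠ 0 → ∀ i j : Fin 3,
      fderiv ℝ (fun y => fderiv ℝ (gF F) y (Pi.single j 1)) x (Pi.single i 1) =
        Mmat F x i j := by
  refine ⟨fun x hx => (contDiffAt_gF hF.ne' hx).contDiffWithinAt, fun x hx i j => ?_⟩
  have hgrad : (fun y => fderiv ℝ (gF F) y (Pi.single j 1)) =ᶠ[𝓝 x]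
      gFLineDeriv F (Pi.single j 1) :=
    (eventually_ne_nhds hx).mono fun y hy => fderiv_gF_apply hF.ne' hy _
  have hdiff : DifferentiableAt ℝ (fun y => fderiv ℝ (gF F) y (Pi.single j 1)) x :=
    (((contDiffAt_gF hF.ne' hx (n := 2)).fderiv_right le_rfl).clm_apply
      contDiffAt_const).differentiableAt one_ne_zero
  rw [← hdiff.lineDeriv_eq_fderiv]
  exact ((hasLineDerivAt_gFLineDeriv_single hF.ne' hx i j).congr_of_eventuallyEq hgrad).lineDeriv
end
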